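/- Under the (A,B) signGD dynamics, assume additionally that 3·σ₁² < σ₀² (equivalently b < a/3), and suppose that at some time t one has a < |A(t)| < |B(t)| (the partition P₅). Then A(t+1) = A(t) − sgn(A(t))·(a/3), B(t+1) = B(t) − sgn(B(t))·b, sgn(A(t+1)) = sgn(A(t)), sgn(B(t+1)) = sgn(B(t)), and |A(t+1)| < |B(t+1)|; in particular, either |A(t+1)| ≤ a, or the pair (A(t+1), B(t+1)) again satisfies a < |A(t+1)| < |B(t+1)|. -/

import Mathlib

/-!
While `|A| < |B|`, the terms `sgn(A+B)` and `sgn(A-B)` equal `sgn B` and `-sgn B`, so the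
dynamics decouple: `A` moves by `a/3` and `B` by `b` towards `0`. Both steps are shorter than
the current distance to `0` (`b < a/3 < a < |A| < |B|`), so neither coordinate changes sign and
each absolute value drops by exactly its step; as `B` loses less than `A`, the order
`|A| < |B|` persists.
-/

/-- The frequency-domain `(A,B)` signGD error dynamics with `a = σ₀²η`, `b = σ₁²η`:
`A(t+1) = A(t) − (a/3)(sgn(A+B) + sgn(A) + sgn(A−B))` and
`B(t+1) = B(t) − (b/2)(sgn(A+B) − sgn(A−B))`. -/
def SignGDDyn (σ0sq σ1sq η : ℝ) (A B : ℕ → ℝ) : Prop :=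
  (∀ t, A (t+1) = A t - σ0sq * η / 3 *
      (Real.sign (A t + B t) + Real.sign (A t) + Real.sign (A t - B t))) ∧
  (∀ t, B (t+1) = B t - σ1sq * η / 2 *
      (Real.sign (A t + B t) - Real.sign (A t - B t)))

namespace Real

theorem sign_add_of_abs_lt {x y : ℝ} (h : |x| < |y|) : sign (x + y) = sign y := by
  rcases lt_trichotomy y 0 with hy | rfl | hy
  · rw [abs_of_neg hy] at h
    rw [sign_of_neg hy, sign_of_neg (by linarith [le_abs_self x])]
  · rw [abs_zero] at h
    exact absurd h (abs_nonneg x).not_gt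
  · rw [abs_of_pos hy] at h
    rw [sign_of_pos hy, sign_of_pos (by linarith [neg_abs_le x])]

theorem sign_sub_of_abs_lt {x y : ℝ} (h : |x| < |y|) : sign (x - y) = -sign y := by
  rw [sub_eq_add_neg, sign_add_of_abs_lt (by rwa [abs_neg]), sign_neg]

theorem sign_sub_sign_mul {x c : ℝ} (hc : c < |x|) : sign (x - sign x * c) = sign x := by
  rcases lt_trichotomy x 0 with hx | rfl | hx
  · rw [abs_of_neg hx] at hc
    rw [sign_of_neg hx, sign_of_neg (by linarith)]
  · simp only [sign_zero, zero_mul, sub_zero]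
  · rw [abs_of_pos hx] at hc
    rw [sign_of_pos hx, sign_of_pos (by linarith)]

theorem abs_sub_sign_mul {x c : ℝ} (hc₀ : 0 ≤ c) (hc : c ≤ |x|) :
    |x - sign x * c| = |x| - c := by
  rcases lt_trichotomy x 0 with hx | rfl | hx
  · rw [abs_of_neg hx] at hc ⊢
    rw [sign_of_neg hx, abs_of_nonpos (by linarith)]
    ring
  · rw [abs_zero] at hc
    simp [le_antisymm hc hc₀]
  · rw [abs_of_pos hx] at hc ⊢
    rw [sign_of_pos hx, abs_of_nonneg (by linarith)]
    ring

end Real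

theorem SignGDDyn.step_of_abs_lt {σ0sq σ1sq η : ℝ} {A B : ℕ → ℝ}
    (hdyn : SignGDDyn σ0sq σ1sq η A B) {t : ℕ} (hAB : |A t| < |B t|) :
    A (t+1) = A t - Real.sign (A t) * (σ0sq * η / 3) ∧
    B (t+1) = B t - Real.sign (B t) * (σ1sq * η) := by
  have hplus := Real.sign_add_of_abs_lt hAB
  have hminus := Real.sign_sub_of_abs_lt hAB
  constructor
  · rw [hdyn.1 t, hplus, hminus]; ring
  · rw [hdyn.2 t, hplus, hminus]; ring

/-- In partition `P₅` (`a < |A(t)| < |B(t)|`) and assuming `3σ₁² < σ₀²`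
(i.e. `b < a/3`): `A` decreases by `a/3` and `B` by `b` towards `0` with
unchanged signs, `|A(t+1)| < |B(t+1)|` still holds; in particular either
`|A(t+1)| ≤ a`, or `(A(t+1), B(t+1))` is again in `P₅`. -/
theorem signGD_partition_P5 (σ0sq σ1sq η : ℝ)
    (h0 : 0 < σ0sq) (h1 : 0 < σ1sq) (hη : 0 < η)
    (hratio : 3 * σ1sq < σ0sq)
    (A B : ℕ → ℝ) (hdyn : SignGDDyn σ0sq σ1sq η A B) (t : ℕ)
    (haA : σ0sq * η < |A t|) (hAB : |A t| < |B t|) :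
    A (t+1) = A t - Real.sign (A t) * (σ0sq * η / 3) ∧
    B (t+1) = B t - Real.sign (B t) * (σ1sq * η) ∧
    Real.sign (A (t+1)) = Real.sign (A t) ∧
    Real.sign (B (t+1)) = Real.sign (B t) ∧
    |A (t+1)| < |B (t+1)| ∧
    (|A (t+1)| ≤ σ0sq * η ∨
      (σ0sq * η < |A (t+1)| ∧ |A (t+1)| < |B (t+1)|)) := by
  obtain ⟨hA, hB⟩ := hdyn.step_of_abs_lt hAB
  have ha : 0 < σ0sq * η := mul_pos h0 hη
  have hb : 0 < σ1sq * η := mul_pos h1 hη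
  have hba : σ1sq * η < σ0sq * η / 3 := by nlinarith
  have hstepA : σ0sq * η / 3 < |A t| := by linarith
  have hstepB : σ1sq * η < |B t| := by linarith
  have habsA := Real.abs_sub_sign_mul (by positivity) hstepA.le
  have habsB := Real.abs_sub_sign_mul hb.le hstepB.le
  have hlt : |A (t+1)| < |B (t+1)| := by rw [hA, hB, habsA, habsB]; linarith
  refine ⟨hA, hB, ?_, ?_, hlt, ?_⟩
  · rw [hA, Real.sign_sub_sign_mul hstepA]
  · rw [hB, Real.sign_sub_sign_mul hstepB]
  · exact (le_or_gt _ _).imp_right (⟨·, hlt⟩)
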